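/- (Denjoy–Koksma inequality) Let α ∈ (0,1) be irrational with convergent denominators q_n, and let f : ℝ → ℝ be 1-periodic, of bounded variation on [0,1], with ∫₀¹ f(t) dt = 0. Then for every n ≥ 0 and every x ∈ ℝ, |Σ_{k=0}^{q_n − 1} f(x + kα)| ≤ V, where V is the total variation of f on [0,1]. -/

import Mathlib

open scoped BigOperators

/-- The Gauss map `G(x) = 1/x − ⌊1/x⌋`. -/
noncomputable def gaussMap (x : ℝ) : ℝ := 1 / x - ⌊1 / x⌋

/-- The continued fraction entries of `α ∈ (0,1)`: `a_n = ⌊1/Gⁿ(α)⌋`. -/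
noncomputable def cfEntry (α : ℝ) (n : ℕ) : ℤ := ⌊1 / gaussMap^[n] α⌋

/-- The denominators of the convergents: `q₋₁ = 1`, `q₀ = a₀`,
`q_n = a_n·q_{n−1} + q_{n−2}`. -/
noncomputable def cfDen (α : ℝ) : ℕ → ℤ
  | 0 => cfEntry α 0
  | 1 => cfEntry α 1 * cfEntry α 0 + 1
  | n + 2 => cfEntry α (n + 2) * cfDen α (n + 1) + cfDen α n

/-!
Let `p/q = p_n/q_n`. Continued fraction theory gives `gcd(p, q) = 1` and `|qα - p| ≤ 1/q`.
Put `δ = qα - p`. Modulo `1`, `kα = σ(k)/q + (k/q)δ`, where `σ(k) = kp mod q` permutes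
`{0, …, q-1}` and the drifts `(k/q)δ`, `0 ≤ k < q`, all lie in `[a, a + 1/q]` for `a = min 0 δ`.
So the `q` cells `[a + j/q, a + (j+1)/q]` of the period window `[a, a + 1]` each contain exactly
one of the points `kα`. On a cell, `f(x + point)/q` differs from the integral of `f(x + ·)` over
the cell by at most `1/q` times its variation there; summing over the cells, the integrals add up
to `∫₀¹ f = 0` and the variations to the variation over one period.
-/

noncomputable def cfNum (α : ℝ) : ℕ → ℤ
  | 0 => 1
  | 1 => cfEntry α 1
  | n + 2 => cfEntry α (n + 2) * cfNum α (n + 1) + cfNum α n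

open GenContFract Set MeasureTheory Function

theorem gaussMap_eq_fract_inv (x : ℝ) : gaussMap x = Int.fract x⁻¹ := by
  rw [gaussMap, one_div, Int.fract]

theorem irrational_gaussMap_iterate {x : ℝ} (hx : Irrational x) (n : ℕ) :
    Irrational (gaussMap^[n] x) := by
  induction n with
  | zero => exact hx
  | succ n ih =>
    rw [Function.iterate_succ_apply', gaussMap_eq_fract_inv]
    exact ih.inv.sub_intCast _

section ContinuedFraction

variable {α : ℝ}

namespace GenContFract

theorem IntFractPair.stream_eq_some_gaussMap_iterate (hirr : Irrational α)
    (hα : α ∈ Ioo (0 : ℝ) 1) (n : ℕ) :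
    ∃ b : ℤ, IntFractPair.stream α n = some ⟨b, gaussMap^[n] α⟩ := by
  induction n with
  | zero =>
    refine ⟨⌊α⌋, ?_⟩
    rw [IntFractPair.stream_zero, Function.iterate_zero_apply, IntFractPair.of,
      Int.fract_eq_self.2 ⟨hα.1.le, hα.2⟩]
  | succ n ih =>
    obtain ⟨b, hb⟩ := ih
    rw [IntFractPair.stream_succ_of_some hb ((irrational_gaussMap_iterate hirr n).ne_zero),
      Function.iterate_succ_apply', gaussMap_eq_fract_inv]
    exact ⟨_, rfl⟩

theorem of_s_get?_eq_cfEntry (hirr : Irrational α) (hα : α ∈ Ioo (0 : ℝ) 1) (n : ℕ) :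
    (GenContFract.of α).s.get? n = some ⟨1, (cfEntry α n : ℝ)⟩ := by
  obtain ⟨b, hb⟩ := IntFractPair.stream_eq_some_gaussMap_iterate hirr hα n
  rw [get?_of_eq_some_of_get?_intFractPair_stream_fr_ne_zero hb
    (irrational_gaussMap_iterate hirr n).ne_zero, cfEntry, one_div]
  rfl

theorem of_not_terminatedAt_of_irrational (hirr : Irrational α) (hα : α ∈ Ioo (0 : ℝ) 1)
    (n : ℕ) : ¬(GenContFract.of α).TerminatedAt n := by
  simp [terminatedAt_iff_s_none, of_s_get?_eq_cfEntry hirr hα n]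

theorem of_h_eq_zero (hα : α ∈ Ioo (0 : ℝ) 1) : (GenContFract.of α).h = 0 := by
  rw [of_h_eq_floor, Int.floor_eq_zero_iff.2 ⟨hα.1.le, hα.2⟩, Int.cast_zero]

-- `conts 0 = ⟨h, 1⟩` is `(p₋₁, q₋₁)`: Mathlib's continuants run one index ahead of `cfNum`,
-- `cfDen`.
theorem of_conts_succ_eq_cfNum_cfDen (hirr : Irrational α) (hα : α ∈ Ioo (0 : ℝ) 1) :
    ∀ n, (GenContFract.of α).conts (n + 1) = ⟨(cfNum α n : ℝ), (cfDen α n : ℝ)⟩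
  | 0 => by
    rw [first_cont_eq (of_s_get?_eq_cfEntry hirr hα 0), of_h_eq_zero hα]
    simp [cfNum, cfDen]
  | 1 => by
    rw [conts_recurrence (of_s_get?_eq_cfEntry hirr hα 1) zeroth_cont_eq_h_one
      (of_conts_succ_eq_cfNum_cfDen hirr hα 0), of_h_eq_zero hα]
    simp [cfNum, cfDen]
  | n + 2 => by
    rw [conts_recurrence (of_s_get?_eq_cfEntry hirr hα (n + 2))
      (of_conts_succ_eq_cfNum_cfDen hirr hα n) (of_conts_succ_eq_cfNum_cfDen hirr hα (n + 1))]
    simp [cfNum, cfDen]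

theorem of_dens_succ_eq_cfDen (hirr : Irrational α) (hα : α ∈ Ioo (0 : ℝ) 1) (n : ℕ) :
    (GenContFract.of α).dens (n + 1) = cfDen α n := by
  rw [den_eq_conts_b, of_conts_succ_eq_cfNum_cfDen hirr hα]

theorem of_nums_succ_eq_cfNum (hirr : Irrational α) (hα : α ∈ Ioo (0 : ℝ) 1) (n : ℕ) :
    (GenContFract.of α).nums (n + 1) = cfNum α n := by
  rw [num_eq_conts_a, of_conts_succ_eq_cfNum_cfDen hirr hα]

end GenContFract

theorem one_le_cfDen (hirr : Irrational α) (hα : α ∈ Ioo (0 : ℝ) 1) (n : ℕ) :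
    1 ≤ cfDen α n := by
  have hfib := succ_nth_fib_le_of_nth_den (v := α) (n := n + 1)
    (Or.inr (of_not_terminatedAt_of_irrational hirr hα n))
  rw [of_dens_succ_eq_cfDen hirr hα] at hfib
  exact_mod_cast (Nat.one_le_cast.2 (Nat.fib_pos.2 (n + 1).succ_pos)).trans hfib

theorem abs_cfDen_mul_sub_cfNum_le (hirr : Irrational α) (hα : α ∈ Ioo (0 : ℝ) 1) (n : ℕ) :
    |cfDen α n * α - cfNum α n| ≤ 1 / cfDen α n := by
  have hq : (0 : ℝ) < cfDen α n := by exact_mod_cast one_le_cfDen hirr hα n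
  have hmono : (cfDen α n : ℝ) ≤ cfDen α (n + 1) := by
    simpa only [of_dens_succ_eq_cfDen hirr hα] using of_den_mono (v := α) (n := n + 1)
  have happrox := abs_sub_convs_le (of_not_terminatedAt_of_irrational hirr hα (n + 1))
  rw [conv_eq_num_div_den, of_nums_succ_eq_cfNum hirr hα, of_dens_succ_eq_cfDen hirr hα,
    of_dens_succ_eq_cfDen hirr hα] at happrox
  calc |cfDen α n * α - cfNum α n| = cfDen α n * |α - cfNum α n / cfDen α n| := by
        rw [← abs_of_pos hq, ← abs_mul, abs_of_pos hq, mul_sub, mul_div_cancel₀ _ hq.ne']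
    _ ≤ cfDen α n * (1 / (cfDen α n * cfDen α (n + 1))) := by gcongr
    _ = 1 / cfDen α (n + 1) := by field_simp
    _ ≤ 1 / cfDen α n := by gcongr

theorem isCoprime_cfNum_cfDen (hirr : Irrational α) (hα : α ∈ Ioo (0 : ℝ) 1) (n : ℕ) :
    IsCoprime (cfNum α n) (cfDen α n) := by
  have hdet := SimpContFract.determinant (s := SimpContFract.of α) (n := n + 1)
    (of_not_terminatedAt_of_irrational hirr hα (n + 1))
  simp only [SimpContFract.of, of_nums_succ_eq_cfNum hirr hα, of_dens_succ_eq_cfDen hirr hα]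
    at hdet
  have hdet' : cfNum α n * cfDen α (n + 1) - cfDen α n * cfNum α (n + 1) = (-1) ^ n := by
    have hsign : (-1 : ℝ) ^ (n + 1 + 1) = (-1) ^ n := by ring
    exact_mod_cast hdet.trans hsign
  refine ⟨(-1) ^ n * cfDen α (n + 1), -((-1) ^ n * cfNum α (n + 1)), ?_⟩
  have hsq : ((-1 : ℤ) ^ n) ^ 2 = 1 := by rw [← pow_mul, mul_comm, pow_mul, neg_one_sq, one_pow]
  linear_combination (-1 : ℤ) ^ n * hdet' + hsq

end ContinuedFraction

section BoundedVariation

variable {g : ℝ → ℝ}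

theorem BoundedVariationOn.intervalIntegrable {a b : ℝ} (hg : BoundedVariationOn g (uIcc a b)) :
    IntervalIntegrable g volume a b := by
  obtain ⟨p, q, hp, hq, rfl⟩ := hg.locallyBoundedVariationOn.exists_monotoneOn_sub_monotoneOn
  exact hp.intervalIntegrable.sub hq.intervalIntegrable

theorem abs_mul_sub_integral_le_of_mem_Icc {a b r : ℝ} (hg : BoundedVariationOn g (Icc a b))
    (hr : r ∈ Icc a b) :
    |(b - a) * g r - ∫ t in a..b, g t| ≤ (b - a) * (eVariationOn g (Icc a b)).toReal := by
  have hab : a ≤ b := hr.1.trans hr.2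
  have hint : IntervalIntegrable g volume a b := by
    rw [← uIcc_of_le hab] at hg
    exact hg.intervalIntegrable
  have hdiff : (b - a) * g r - ∫ t in a..b, g t = ∫ t in a..b, (g r - g t) := by
    rw [intervalIntegral.integral_sub intervalIntegrable_const hint,
      intervalIntegral.integral_const, smul_eq_mul]
  have hosc : ∀ t ∈ uIoc a b, ‖g r - g t‖ ≤ (eVariationOn g (Icc a b)).toReal := by
    intro t ht
    rw [uIoc_of_le hab] at ht
    exact hg.dist_le hr (Ioc_subset_Icc_self ht)
  rw [hdiff, ← Real.norm_eq_abs, mul_comm, ← abs_of_nonneg (sub_nonneg.2 hab)]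
  exact intervalIntegral.norm_integral_le_of_norm_le_const hosc

theorem BoundedVariationOn.toReal_eVariationOn_eq_sum {I : ℕ → ℝ} (hI : Monotone I) {Q : ℕ}
    (hg : BoundedVariationOn g (Icc (I 0) (I Q))) :
    (eVariationOn g (Icc (I 0) (I Q))).toReal =
      ∑ j ∈ Finset.range Q, (eVariationOn g (Icc (I j) (I (j + 1)))).toReal := by
  rw [← eVariationOn.sum' g hI, ENNReal.toReal_sum fun j hj => hg.mono
    (Icc_subset_Icc (hI (Nat.zero_le j)) (hI (Finset.mem_range.1 hj)))]

theorem abs_mul_sum_sub_integral_le {a h : ℝ} {Q : ℕ} {σ : ℕ → ℕ} {y : ℕ → ℝ} (hh : 0 ≤ h)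
    (hg : BoundedVariationOn g (Icc a (a + Q * h)))
    (hσ : BijOn σ (Finset.range Q) (Finset.range Q))
    (hy : ∀ k < Q, y k ∈ Icc (a + σ k * h) (a + (σ k + 1) * h)) :
    |h * ∑ k ∈ Finset.range Q, g (y k) - ∫ t in a..a + Q * h, g t| ≤
      h * (eVariationOn g (Icc a (a + Q * h))).toReal := by
  set I : ℕ → ℝ := fun j => a + j * h with hIdef
  have hI : Monotone I := fun i j hij => by simp only [hIdef]; gcongr
  have hg' : BoundedVariationOn g (Icc (I 0) (I Q)) := by simpa [I] using hg
  have hcell : ∀ j < Q, BoundedVariationOn g (Icc (I j) (I (j + 1))) := fun j hj =>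
    hg'.mono (Icc_subset_Icc (hI (Nat.zero_le j)) (hI hj))
  have hreindex : ∀ F : ℕ → ℝ, ∑ k ∈ Finset.range Q, F (σ k) = ∑ j ∈ Finset.range Q, F j :=
    fun F => Finset.sum_nbij σ hσ.mapsTo hσ.injOn hσ.surjOn fun _ _ => rfl
  have hintegral : ∫ t in a..a + Q * h, g t =
      ∑ k ∈ Finset.range Q, ∫ t in I (σ k)..I (σ k + 1), g t := by
    rw [hreindex (fun j => ∫ t in I j..I (j + 1), g t),
      intervalIntegral.sum_integral_adjacent_intervals fun j hj =>
        (uIcc_of_le (hI j.le_succ) ▸ hcell j hj).intervalIntegrable]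
    simp [I]
  have hvariation : (eVariationOn g (Icc a (a + Q * h))).toReal =
      ∑ k ∈ Finset.range Q, (eVariationOn g (Icc (I (σ k)) (I (σ k + 1)))).toReal := by
    rw [hreindex (fun j => (eVariationOn g (Icc (I j) (I (j + 1)))).toReal),
      ← hg'.toReal_eVariationOn_eq_sum hI]
    simp [I]
  have hterm : ∀ k ∈ Finset.range Q,
      |h * g (y k) - ∫ t in I (σ k)..I (σ k + 1), g t| ≤
        h * (eVariationOn g (Icc (I (σ k)) (I (σ k + 1)))).toReal := by
    intro k hk
    have hwidth : I (σ k + 1) - I (σ k) = h := by simp only [hIdef]; push_cast; ring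
    have hyk : y k ∈ Icc (I (σ k)) (I (σ k + 1)) := by
      simpa only [hIdef, Nat.cast_succ] using hy k (Finset.mem_range.1 hk)
    simpa only [hwidth] using abs_mul_sub_integral_le_of_mem_Icc
      (hcell (σ k) (Finset.mem_range.1 (hσ.mapsTo hk))) hyk
  calc |h * ∑ k ∈ Finset.range Q, g (y k) - ∫ t in a..a + Q * h, g t|
      = |∑ k ∈ Finset.range Q, (h * g (y k) - ∫ t in I (σ k)..I (σ k + 1), g t)| := by
        rw [hintegral, Finset.mul_sum, Finset.sum_sub_distrib]
    _ ≤ ∑ k ∈ Finset.range Q, |h * g (y k) - ∫ t in I (σ k)..I (σ k + 1), g t| :=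
        Finset.abs_sum_le_sum_abs _ _
    _ ≤ ∑ k ∈ Finset.range Q, h * (eVariationOn g (Icc (I (σ k)) (I (σ k + 1)))).toReal :=
        Finset.sum_le_sum hterm
    _ = h * (eVariationOn g (Icc a (a + Q * h))).toReal := by rw [hvariation, Finset.mul_sum]

theorem eVariationOn_comp_add_right (c a b : ℝ) :
    eVariationOn (fun t => g (t + c)) (Icc a b) = eVariationOn g (Icc (a + c) (b + c)) := by
  rw [← image_add_const_Icc, ← eVariationOn.comp_eq_of_monotoneOn g (· + c)
    ((monotone_id.add_const c).monotoneOn _)]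
  rfl

theorem Function.Periodic.eVariationOn_Icc_add_period {T : ℝ} (hg : Periodic g T) (hT : 0 < T)
    (c : ℝ) : eVariationOn g (Icc c (c + T)) = eVariationOn g (Icc 0 T) := by
  have htranslate : ∀ a b, eVariationOn g (Icc (a + T) (b + T)) = eVariationOn g (Icc a b) :=
    fun a b => by rw [← eVariationOn_comp_add_right, funext hg]
  have hsplit : ∀ {a b c : ℝ}, a ≤ b → b ≤ c →
      eVariationOn g (Icc a b) + eVariationOn g (Icc b c) = eVariationOn g (Icc a c) :=
    fun hab hbc => by simpa using eVariationOn.Icc_add_Icc g (s := univ) hab hbc (mem_univ _)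
  have hwindow : Periodic (fun c => eVariationOn g (Icc c (c + T))) T := fun c =>
    htranslate c (c + T)
  obtain ⟨r, ⟨hr0, hrT⟩, hr⟩ := hwindow.exists_mem_Ico₀ hT c
  rw [hr, ← hsplit hr0 hrT.le, ← hsplit hrT.le (by linarith : T ≤ r + T), add_comm,
    ← htranslate 0 r, zero_add]

end BoundedVariation

theorem bijOn_toNat_mul_emod {q : ℕ} {p : ℤ} (hq : 0 < q) (hcop : IsCoprime p q) :
    BijOn (fun k : ℕ => ((k * p) % q).toNat) (Finset.range q) (Finset.range q) := by
  have hmaps : MapsTo (fun k : ℕ => ((k * p) % q).toNat) (Finset.range q) (Finset.range q) :=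
    fun k _ => by
      have := Int.emod_lt_of_pos (k * p) (Int.natCast_pos.2 hq)
      simp only [Finset.coe_range, mem_Iio]
      omega
  refine ((Finset.range q).finite_toSet.injOn_iff_bijOn_of_mapsTo hmaps).1 fun k hk l hl hkl => ?_
  simp only [Finset.coe_range, mem_Iio] at hk hl
  have hmod : (k * p : ℤ) ≡ l * p [ZMOD q] := by
    have := Int.emod_nonneg (k * p) (Int.natCast_pos.2 hq).ne'
    have := Int.emod_nonneg (l * p) (Int.natCast_pos.2 hq).ne'
    simp only at hkl
    exact (by omega : (k * p : ℤ) % q = l * p % q)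
  have hdvd : (q : ℤ) ∣ (l - k : ℤ) :=
    hcop.symm.dvd_of_dvd_mul_right (by simpa [sub_mul] using hmod.dvd)
  have := Int.eq_zero_of_abs_lt_dvd hdvd (by rw [abs_lt]; omega)
  omega

theorem mul_sub_ediv_mem_Icc {α : ℝ} {q : ℕ} {p : ℤ} (hq : 0 < q) (happrox : |q * α - p| ≤ 1 / q)
    {k : ℕ} (hk : k ≤ q) :
    k * α - ((k * p) / q : ℤ) ∈ Icc (min 0 (q * α - p) + ((k * p) % q).toNat * (1 / q))
      (min 0 (q * α - p) + (((k * p) % q).toNat + 1) * (1 / q)) := by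
  set δ := q * α - p
  have hq' : (0 : ℝ) < q := Nat.cast_pos.2 hq
  have hrem : ((((k * p) % q).toNat : ℕ) : ℝ) = (((k * p) % q : ℤ) : ℝ) := by
    exact_mod_cast Int.toNat_of_nonneg (Int.emod_nonneg _ (Int.natCast_pos.2 hq).ne')
  have hdiv : (q : ℝ) * (((k * p) / q : ℤ) : ℝ) + (((k * p) % q : ℤ) : ℝ) = k * p := by
    exact_mod_cast Int.mul_ediv_add_emod (k * p : ℤ) q
  have hpoint : k * α - (((k * p) / q : ℤ) : ℝ) =
      (((k * p) % q : ℤ) : ℝ) * (1 / q) + k / q * δ := by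
    field_simp
    linear_combination -hdiv
  have hk' : (k : ℝ) / q ≤ 1 := (div_le_one hq').2 (by exact_mod_cast hk)
  have hk0 : (0 : ℝ) ≤ k / q := by positivity
  have hdrift : k / q * δ ∈ Icc (min 0 δ) (min 0 δ + 1 / q) := by
    rcases le_total 0 δ with hδ | hδ
    · simp only [min_eq_left hδ, abs_of_nonneg hδ] at happrox ⊢
      constructor <;> nlinarith
    · simp only [min_eq_right hδ, abs_of_nonpos hδ] at happrox ⊢
      constructor <;> nlinarith
  rw [hrem, hpoint]
  constructor <;> linarith [hdrift.1, hdrift.2]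

theorem abs_sum_le_eVariationOn_of_abs_mul_sub_le {f : ℝ → ℝ} (hf : Periodic f 1)
    (hbv : BoundedVariationOn f (Icc 0 1)) (hmean : ∫ t in (0 : ℝ)..1, f t = 0) {α : ℝ} {q : ℕ}
    {p : ℤ} (hq : 0 < q) (hcop : IsCoprime p q) (happrox : |q * α - p| ≤ 1 / q) (x : ℝ) :
    |∑ k ∈ Finset.range q, f (x + k * α)| ≤ (eVariationOn f (Icc 0 1)).toReal := by
  set δ := q * α - p
  set a := min 0 δ
  have hq' : (0 : ℝ) < q := Nat.cast_pos.2 hq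
  have hwindow : (a + q * (1 / q : ℝ)) = a + 1 := by field_simp
  have hvar : eVariationOn (fun t => f (t + x)) (Icc a (a + 1)) = eVariationOn f (Icc 0 1) := by
    rw [eVariationOn_comp_add_right, add_right_comm, hf.eVariationOn_Icc_add_period one_pos]
  have hint : ∫ t in a..a + 1, f (t + x) = 0 := by
    rw [intervalIntegral.integral_comp_add_right, add_right_comm,
      hf.intervalIntegral_add_eq (a + x) 0, zero_add, hmean]
  have key := abs_mul_sum_sub_integral_le (g := fun t => f (t + x)) (by positivity)
    (by rw [hwindow, BoundedVariationOn, hvar]; exact hbv) (bijOn_toNat_mul_emod hq hcop)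
    fun k hk => mul_sub_ediv_mem_Icc hq happrox hk.le
  have hsum : ∑ k ∈ Finset.range q, f (k * α - ((k * p) / q : ℤ) + x) =
      ∑ k ∈ Finset.range q, f (x + k * α) := by
    refine Finset.sum_congr rfl fun k _ => ?_
    rw [show k * α - ((k * p) / q : ℤ) + x = x + k * α - ((k * p) / q : ℤ) * 1 by ring]
    exact hf.sub_int_mul_eq _
  rw [hwindow, hint, hvar, sub_zero, hsum, abs_mul, abs_of_pos (by positivity)] at key
  exact le_of_mul_le_mul_left key (by positivity)

theorem stmt7 (α : ℝ) (hα : α ∈ Set.Ioo (0 : ℝ) 1) (hirr : Irrational α)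
    (f : ℝ → ℝ) (hper : ∀ x, f (x + 1) = f x)
    (hbv : BoundedVariationOn f (Set.Icc 0 1))
    (hmean : ∫ t in (0 : ℝ)..1, f t = 0) :
    ∀ n : ℕ, ∀ x : ℝ,
      |∑ k ∈ Finset.range (cfDen α n).toNat, f (x + (k : ℝ) * α)| ≤
        (eVariationOn f (Set.Icc 0 1)).toReal := by
  intro n x
  have hq : ((cfDen α n).toNat : ℤ) = cfDen α n :=
    Int.toNat_of_nonneg (zero_le_one.trans (one_le_cfDen hirr hα n))
  have hqr : ((cfDen α n).toNat : ℝ) = cfDen α n := by exact_mod_cast hq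
  refine abs_sum_le_eVariationOn_of_abs_mul_sub_le hper hbv hmean (p := cfNum α n)
    (by have := one_le_cfDen hirr hα n; omega) (hq ▸ isCoprime_cfNum_cfDen hirr hα n) ?_ x
  rw [hqr]
  exact abs_cfDen_mul_sub_cfNum_le hirr hα n
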